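/- Let F₁ and F₂ be forests of rooted binary X-trees T₁ and T₂, let F be an agreement forest of F₁ and F₂, and suppose ab|c is a triple of F₁ that is incompatible with F₂. Then in F, either a and b are in different components, or a and c are in different components. -/
import Mathlib


namespace Phylo

/-- Rooted binary phylogenetic tree with leaves labelled by `X`. -/
inductive PT (X : Type) where
  | leaf : X → PT X
  | node : PT X → PT X → PT X
deriving DecidableEq

variable {X : Type} [DecidableEq X]

/-- The multiset of leaf labels of a tree. -/
def labels : PT X → Multiset X
  | .leaf x => {x}
  | .node l r => labels l + labels r

/-- The finite set of leaf labels of a tree. -/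
def labs : PT X → Finset X
  | .leaf x => {x}
  | .node l r => labs l ∪ labs r

/-- The multiset of leaf labels of a forest. -/
def labelsF (F : Multiset (PT X)) : Multiset X := (F.map labels).sum

/-- `Sub u t`: `u` occurs as a rooted subtree (i.e. a node) of `t`. -/
inductive Sub : PT X → PT X → Prop
  | refl (t : PT X) : Sub t t
  | left {u l r : PT X} : Sub u l → Sub u (PT.node l r)
  | right {u l r : PT X} : Sub u r → Sub u (PT.node l r)

/-- Boolean version of `Sub`. -/
def subB : PT X → PT X → Bool
  | u, .leaf x => decide (u = .leaf x)
  | u, .node l r => decide (u = .node l r) || subB u l || subB u r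

/-- The finite set of all rooted subtrees (nodes) of a tree. -/
def subtrees : PT X → Finset (PT X)
  | .leaf x => {.leaf x}
  | .node l r => insert (.node l r) (subtrees l ∪ subtrees r)

/-- A node of a forest, identified with the subtree below it. -/
def NodeOf (F : Multiset (PT X)) (u : PT X) : Prop := ∃ C ∈ F, Sub u C

/-- Cut the edges above the subtrees in `E`, suppressing unlabelled nodes with
fewer than two children.  Returns the component containing the root (if any)
together with the multiset of detached components. -/
def cutAll (E : Finset (PT X)) : PT X → Option (PT X) × Multiset (PT X)
  | .leaf x => (some (.leaf x), 0)
  | .node l r =>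
    let pl := cutAll E l
    let pr := cutAll E r
    let lk : Option (PT X) := if l ∈ E then none else pl.1
    let lM : Multiset (PT X) :=
      if l ∈ E then pl.2 + (↑pl.1.toList : Multiset (PT X)) else pl.2
    let rk : Option (PT X) := if r ∈ E then none else pr.1
    let rM : Multiset (PT X) :=
      if r ∈ E then pr.2 + (↑pr.1.toList : Multiset (PT X)) else pr.2
    (match lk, rk with
      | some a, some b => some (.node a b)
      | some a, none => some a
      | none, some b => some b
      | none, none => none,
     lM + rM)

/-- `F ÷ E`: the forest yielded by deleting the edges in `E` from the forest
`F` (an edge is identified by the subtree hanging below it) and suppressing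
unlabelled nodes with fewer than two children. -/
def divF (F : Multiset (PT X)) (E : Finset (PT X)) : Multiset (PT X) :=
  (F.map (fun t => (↑(cutAll E t).1.toList : Multiset (PT X)) + (cutAll E t).2)).sum

/-- `F` is a forest of the forest `G`. -/
def ForestOf (F G : Multiset (PT X)) : Prop := ∃ E : Finset (PT X), divF G E = F

/-- `F` is an agreement forest of the trees `T₁` and `T₂`. -/
def IsAF (F : Multiset (PT X)) (T₁ T₂ : PT X) : Prop :=
  ForestOf F {T₁} ∧ ForestOf F {T₂}

/-- The minimum number of edges that must be cut in `F` to obtain an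
agreement forest of `T₁` and `T₂`. -/
noncomputable def ecut (T₁ T₂ : PT X) (F : Multiset (PT X)) : ℕ :=
  sInf {n | ∃ E : Finset (PT X), E.card = n ∧ IsAF (divF F E) T₁ T₂}

/-- The number of components of a maximum agreement forest. -/
noncomputable def maf (T₁ T₂ : PT X) : ℕ :=
  sInf {n | ∃ F : Multiset (PT X), IsAF F T₁ T₂ ∧ Multiset.card F = n}

/-- `u` is the smallest subtree of `t` containing all labels in `S`
(the LCA of `S` in `t`). -/
def IsLCA (t : PT X) (S : Finset X) (u : PT X) : Prop :=
  Sub u t ∧ S ⊆ labs u ∧ ∀ v, Sub v u → S ⊆ labs v → v = u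

/-- In `t`, the LCA of `S₁` is an ancestor of the LCA of `S₂`. -/
def Anc (t : PT X) (S₁ S₂ : Finset X) : Prop :=
  ∃ u v, IsLCA t S₁ u ∧ IsLCA t S₂ v ∧ Sub v u

/-- In `t`, the LCA of `S₁` is a proper ancestor of the LCA of `S₂`. -/
def PAnc (t : PT X) (S₁ S₂ : Finset X) : Prop :=
  ∃ u v, IsLCA t S₁ u ∧ IsLCA t S₂ v ∧ Sub v u ∧ v ≠ u

/-- Edge of the cycle graph of an agreement forest of `T₁` and `T₂`:
the root of component `C` maps to an ancestor of the root of `C'`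
in `T₁` or in `T₂`. -/
def CEdge (T₁ T₂ : PT X) (C C' : PT X) : Prop :=
  C ≠ C' ∧ (Anc T₁ (labs C) (labs C') ∨ Anc T₂ (labs C) (labs C'))

/-- The cycle graph of `F` (w.r.t. `T₁`, `T₂`) contains a directed cycle. -/
def HasCycle (T₁ T₂ : PT X) (F : Multiset (PT X)) : Prop :=
  ∃ (C : PT X) (l : List (PT X)), C ∈ F ∧ (∀ D ∈ l, D ∈ F) ∧
    List.Chain (CEdge T₁ T₂) C (l ++ [C])

/-- `F` is an acyclic agreement forest of `T₁` and `T₂`. -/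
def IsAAF (F : Multiset (PT X)) (T₁ T₂ : PT X) : Prop :=
  IsAF F T₁ T₂ ∧ ¬ HasCycle T₁ T₂ F

/-- The minimum number of edges that must be cut in `F` to obtain an
acyclic agreement forest of `T₁` and `T₂`. -/
noncomputable def aecut (T₁ T₂ : PT X) (F : Multiset (PT X)) : ℕ :=
  sInf {n | ∃ E : Finset (PT X), E.card = n ∧ IsAAF (divF F E) T₁ T₂}

/-- The number of components of a maximum acyclic agreement forest. -/
noncomputable def maaf (T₁ T₂ : PT X) : ℕ :=
  sInf {n | ∃ F : Multiset (PT X), IsAAF F T₁ T₂ ∧ Multiset.card F = n}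

/-- `a` and `c` are siblings in some component of `F`. -/
def SiblingIn (F : Multiset (PT X)) (a c : PT X) : Prop :=
  ∃ C ∈ F, Sub (PT.node a c) C ∨ Sub (PT.node c a) C

/-- `(a,c)` is a sibling pair of `F₁`: `a` and `c` have a common parent in
`F₁` and both exist in `F₂`. -/
def SiblingPair (F₁ F₂ : Multiset (PT X)) (a c : PT X) : Prop :=
  SiblingIn F₁ a c ∧ (∃ C ∈ F₂, Sub a C) ∧ (∃ C ∈ F₂, Sub c C)

/-- The nodes `a` and `c` lie in the same component of `F`. -/
def SameComp (F : Multiset (PT X)) (a c : PT X) : Prop :=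
  ∃ C ∈ F, Sub a C ∧ Sub c C

/-- The leaves labelled `a` and `b` lie in the same component of `F`. -/
def SameCompLabel (F : Multiset (PT X)) (a b : X) : Prop :=
  ∃ C ∈ F, a ∈ labs C ∧ b ∈ labs C

/-- `ab|c` is a triple of the forest `F`. -/
def IsTriple (F : Multiset (PT X)) (a b c : X) : Prop :=
  ∃ C ∈ F, ∃ u, Sub u C ∧ a ∈ labs u ∧ b ∈ labs u ∧ c ∈ labs C ∧ c ∉ labs u

/-- `UpChain x m bs`: walking up from node `x` to node `m`, the siblings
encountered (the pendant nodes of the path) are `bs`, in order. -/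
inductive UpChain : PT X → PT X → List (PT X) → Prop
  | nil (x : PT X) : UpChain x x []
  | consL {x m b : PT X} {bs : List (PT X)} :
      UpChain (PT.node x b) m bs → UpChain x m (b :: bs)
  | consR {x m b : PT X} {bs : List (PT X)} :
      UpChain (PT.node b x) m bs → UpChain x m (b :: bs)

/-- `CutEdge T R s`: cutting one edge of `T` (and suppressing the resulting
degree-two node) leaves the tree `R` and detaches the subtree `s`. -/
inductive CutEdge : PT X → PT X → PT X → Prop
  | cutL (l r : PT X) : CutEdge (.node l r) r l
  | cutR (l r : PT X) : CutEdge (.node l r) l r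
  | inL {l l' s : PT X} (r : PT X) : CutEdge l l' s → CutEdge (.node l r) (.node l' r) s
  | inR {r r' s : PT X} (l : PT X) : CutEdge r r' s → CutEdge (.node l r) (.node l r') s

/-- `Graft s R T'`: `T'` is obtained from `R` by subdividing an edge of `R`
(or adding a new root) and attaching `s` below the new node. -/
inductive Graft (s : PT X) : PT X → PT X → Prop
  | here (t : PT X) : Graft s t (.node s t)
  | here' (t : PT X) : Graft s t (.node t s)
  | inL {l l' : PT X} (r : PT X) : Graft s l l' → Graft s (.node l r) (.node l' r)
  | inR {r r' : PT X} (l : PT X) : Graft s r r' → Graft s (.node l r) (.node l r')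

/-- A single subtree prune-and-regraft operation. -/
def SprStep (T T' : PT X) : Prop := ∃ R s, CutEdge T R s ∧ Graft s R T'

/-- `n` SPR operations transform the first tree into the second. -/
def SprN : ℕ → PT X → PT X → Prop
  | 0 => fun T T' => T = T'
  | n + 1 => fun T T'' => ∃ T', SprStep T T' ∧ SprN n T' T''

/-- The SPR distance. -/
noncomputable def dspr (T₁ T₂ : PT X) : ℕ := sInf {n | SprN n T₁ T₂}

/-- The edges on the path from node `v` to the root of the component `C`
(each edge identified by the subtree below it). -/
def pathEdges (C v : PT X) : Finset (PT X) :=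
  (subtrees C).filter (fun s => subB v s ∧ s ≠ C)

/-- `HybEdge T ρ F u C`: the expanded cycle graph of `F` has a `T`-hybrid edge
from the node `u` of `F` to the root of the component `C ≠ C_ρ` of `F`;
`u` is the lowest node of `F` whose image in `T` is a proper ancestor of the
image of the root of `C`. -/
def HybEdge (T : PT X) (ρ : X) (F : Multiset (PT X)) (u C : PT X) : Prop :=
  C ∈ F ∧ ρ ∉ labs C ∧ NodeOf F u ∧ PAnc T (labs u) (labs C) ∧
    ∀ u', NodeOf F u' → PAnc T (labs u') (labs C) → Anc T (labs u') (labs u)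

/-- Edge of the expanded cycle graph `ecyc(F)`: either a tree edge of `F`
(directed away from the root) or a hybrid edge. -/
def EcycEdge (T₁ T₂ : PT X) (ρ : X) (F : Multiset (PT X)) (u v : PT X) : Prop :=
  (NodeOf F u ∧ ∃ l r, u = PT.node l r ∧ (v = l ∨ v = r))
  ∨ HybEdge T₁ ρ F u v ∨ HybEdge T₂ ρ F u v

/-- The expanded cycle graph of `F` contains a directed cycle. -/
def HasCycleE (T₁ T₂ : PT X) (ρ : X) (F : Multiset (PT X)) : Prop :=
  ∃ (u : PT X) (l : List (PT X)), NodeOf F u ∧ (∀ w ∈ l, NodeOf F w) ∧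
    List.Chain (EcycEdge T₁ T₂ ρ F) u (l ++ [u])

/-- The set of potential exit nodes of `F`: tails of hybrid edges of
`ecyc(F)`. -/
def pen (T₁ T₂ : PT X) (ρ : X) (F : Multiset (PT X)) : Set (PT X) :=
  {u | ∃ C, HybEdge T₁ ρ F u C ∨ HybEdge T₂ ρ F u C}

/-- The edge above `s` lies on the path from node `a` up to node `m`. -/
def OnPathUp (a m s : PT X) : Prop := Sub a s ∧ Sub s m ∧ s ≠ m

/-- `a` and `b` are connected in `F − E` (deleting the edges in `E`,
without suppression). -/
def ConnAvoiding (F : Multiset (PT X)) (E : Finset (PT X)) (a b : PT X) : Prop :=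
  ∃ C ∈ F, ∃ m, Sub m C ∧ Sub a m ∧ Sub b m ∧
    ∀ s ∈ E, ¬ OnPathUp a m s ∧ ¬ OnPathUp b m s

/-- `v` is an endpoint of the edge above `s` in `F`. -/
def IsEndpoint (F : Multiset (PT X)) (s v : PT X) : Prop :=
  v = s ∨ (NodeOf F v ∧ ∃ w, v = PT.node s w ∨ v = PT.node w s)

/-- Components `C` and `C'` (of some forest) overlap in the forest `F₁`. -/
def Overlap (F₁ : Multiset (PT X)) (C C' : PT X) : Prop :=
  ∃ a b c d : X, a ∈ labs C ∧ b ∈ labs C ∧ c ∈ labs C' ∧ d ∈ labs C' ∧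
    ∃ D ∈ F₁, a ∈ labs D ∧ b ∈ labs D ∧ c ∈ labs D ∧ d ∈ labs D ∧
      ∃ s, Sub s D ∧ s ≠ D ∧
        Xor' (a ∈ labs s) (b ∈ labs s) ∧ Xor' (c ∈ labs s) (d ∈ labs s)

section AuxIncompat
set_option linter.unusedSectionVars false
variable {X : Type} [DecidableEq X]

lemma mem_labs {x : X} : ∀ t : PT X, x ∈ labs t ↔ x ∈ labels t
  | .leaf y => by simp [labs, labels]
  | .node l r => by simp [labs, labels, mem_labs l, mem_labs r]

lemma sub_labs {u t : PT X} (h : Sub u t) : labs u ⊆ labs t := by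
  induction h with
  | refl => exact subset_rfl
  | left _ ih => exact ih.trans (by simp [labs])
  | right _ ih => exact ih.trans (by simp [labs])

lemma leaf_sub {x : X} : ∀ {t : PT X}, x ∈ labs t → Sub (PT.leaf x) t
  | .leaf y, h => by simp [labs] at h; subst h; exact Sub.refl _
  | .node l r, h => by
      rw [labs, Finset.mem_union] at h
      rcases h with h | h
      · exact Sub.left (leaf_sub h)
      · exact Sub.right (leaf_sub h)

lemma sub_leaf_inv {u : PT X} {x : X} (h : Sub u (PT.leaf x)) : u = PT.leaf x := by
  cases h; rfl

lemma sub_node_inv {u l r : PT X} (h : Sub u (PT.node l r)) :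
    u = PT.node l r ∨ Sub u l ∨ Sub u r := by
  cases h with
  | refl => exact Or.inl rfl
  | left h => exact Or.inr (Or.inl h)
  | right h => exact Or.inr (Or.inr h)

lemma nodup_disj {l r : PT X} (h : (labels (PT.node l r)).Nodup) {x : X}
    (hl : x ∈ labs l) (hr : x ∈ labs r) : False := by
  rw [labels, Multiset.nodup_add] at h
  exact Multiset.disjoint_left.mp h.2.2 ((mem_labs l).mp hl) ((mem_labs r).mp hr)

lemma nodup_l {l r : PT X} (h : (labels (PT.node l r)).Nodup) : (labels l).Nodup := by
  rw [labels, Multiset.nodup_add] at h; exact h.1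

lemma nodup_r {l r : PT X} (h : (labels (PT.node l r)).Nodup) : (labels r).Nodup := by
  rw [labels, Multiset.nodup_add] at h; exact h.2.1

lemma nested {x : X} : ∀ {t : PT X}, (labels t).Nodup → ∀ {u v : PT X}, Sub u t → Sub v t →
    x ∈ labs u → x ∈ labs v → Sub u v ∨ Sub v u
  | .leaf y, _, u, v, hu, hv, _, _ => by
      rw [sub_leaf_inv hu, sub_leaf_inv hv]; exact Or.inl (Sub.refl _)
  | .node l r, hnd, u, v, hu, hv, hxu, hxv => by
      rcases sub_node_inv hu with rfl | hu' | hu'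
      · exact Or.inr hv
      · rcases sub_node_inv hv with rfl | hv' | hv'
        · exact Or.inl (Sub.left hu')
        · exact nested (nodup_l hnd) hu' hv' hxu hxv
        · exact absurd (sub_labs hv' hxv) (fun h => nodup_disj hnd (sub_labs hu' hxu) h)
      · rcases sub_node_inv hv with rfl | hv' | hv'
        · exact Or.inl (Sub.right hu')
        · exact absurd (sub_labs hv' hxv) (fun h => nodup_disj hnd h (sub_labs hu' hxu))
        · exact nested (nodup_r hnd) hu' hv' hxu hxv

/-- triple shape inside a single tree -/
def TT (t : PT X) (a b c : X) : Prop :=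
  ∃ u, Sub u t ∧ a ∈ labs u ∧ b ∈ labs u ∧ c ∉ labs u

lemma trichotomy : ∀ (t : PT X), (labels t).Nodup → ∀ {a b c : X},
    a ∈ labs t → b ∈ labs t → c ∈ labs t → a ≠ b →
    TT t a b c ∨ TT t a c b ∨ TT t b c a
  | .leaf y, _, a, b, c, ha, hb, _, hab => by
      simp [labs] at ha hb; exact absurd (ha.trans hb.symm) hab
  | .node l r, hnd, a, b, c, ha, hb, hc, hab => by
      rw [labs, Finset.mem_union] at ha hb hc
      have promL : ∀ p q s : X, TT l p q s → TT (PT.node l r) p q s := by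
        rintro p q s ⟨u, hu, h1, h2, h3⟩; exact ⟨u, Sub.left hu, h1, h2, h3⟩
      have promR : ∀ p q s : X, TT r p q s → TT (PT.node l r) p q s := by
        rintro p q s ⟨u, hu, h1, h2, h3⟩; exact ⟨u, Sub.right hu, h1, h2, h3⟩
      have pairL : ∀ p q s : X, p ∈ labs l → q ∈ labs l → s ∈ labs r →
          TT (PT.node l r) p q s :=
        fun p q s hp hq hs =>
          ⟨l, Sub.left (Sub.refl l), hp, hq, fun h => nodup_disj hnd h hs⟩
      have pairR : ∀ p q s : X, p ∈ labs r → q ∈ labs r → s ∈ labs l →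
          TT (PT.node l r) p q s :=
        fun p q s hp hq hs =>
          ⟨r, Sub.right (Sub.refl r), hp, hq, fun h => nodup_disj hnd hs h⟩
      rcases ha with ha | ha <;> rcases hb with hb | hb <;> rcases hc with hc | hc
      · exact (trichotomy l (nodup_l hnd) ha hb hc hab).imp (promL _ _ _)
          (Or.imp (promL _ _ _) (promL _ _ _))
      · exact Or.inl (pairL _ _ _ ha hb hc)
      · exact Or.inr (Or.inl (pairL _ _ _ ha hc hb))
      · exact Or.inr (Or.inr (pairR _ _ _ hb hc ha))
      · exact Or.inr (Or.inr (pairL _ _ _ hb hc ha))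
      · exact Or.inr (Or.inl (pairR _ _ _ ha hc hb))
      · exact Or.inl (pairR _ _ _ ha hb hc)
      · exact (trichotomy r (nodup_r hnd) ha hb hc hab).imp (promR _ _ _)
          (Or.imp (promR _ _ _) (promR _ _ _))


def comps (E : Finset (PT X)) (t : PT X) : Multiset (PT X) :=
  (↑(cutAll E t).1.toList : Multiset (PT X)) + (cutAll E t).2

lemma mem_msum {α : Type*} {S : Multiset (Multiset α)} {a : α} :
    a ∈ S.sum ↔ ∃ s ∈ S, a ∈ s := by
  induction S using Multiset.induction_on with
  | empty => simp
  | cons x S ih => simp [Multiset.sum_cons, ih]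

lemma mem_le_sum {α : Type*} {S : Multiset (Multiset α)} {s : Multiset α} (h : s ∈ S) :
    s ≤ S.sum := by
  obtain ⟨S', rfl⟩ := Multiset.exists_cons_of_mem h
  simpa [Multiset.sum_cons] using Multiset.le_add_right _ _

lemma comps_labels (E : Finset (PT X)) :
    ∀ t : PT X, (Multiset.map labels (comps E t)).sum = labels t
  | .leaf x => by simp [comps, cutAll, labels]
  | .node l r => by
      have ihl := comps_labels E l
      have ihr := comps_labels E r
      rcases pl : (cutAll E l) with ⟨ol, Ml⟩
      rcases pr : (cutAll E r) with ⟨or_, Mr⟩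
      simp only [comps, cutAll, pl, pr] at ihl ihr ⊢
      by_cases hl : l ∈ E <;> by_cases hr : r ∈ E <;>
        rcases ol with _ | A <;> rcases or_ with _ | B <;>
        simp_all [labels, Multiset.map_add, Multiset.sum_add] <;> (try rw [← ihl]) <;> (try rw [← ihr]) <;> (try abel)

lemma comp_labels_le {E : Finset (PT X)} {t C : PT X} (hC : C ∈ comps E t) :
    labels C ≤ labels t := by
  calc labels C ≤ (Multiset.map labels (comps E t)).sum :=
        mem_le_sum (Multiset.mem_map_of_mem _ hC)
    _ = labels t := comps_labels E t

lemma labs_le {s t : PT X} (h : labels s ≤ labels t) : labs s ⊆ labs t := fun x hx =>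
  (mem_labs t).mpr (Multiset.mem_of_le h ((mem_labs s).mp hx))

lemma comps_restrict (E : Finset (PT X)) :
    ∀ t : PT X, (labels t).Nodup →
    ∀ C ∈ comps E t, ∀ u, Sub u C →
    ∃ u', Sub u' t ∧ labs u ⊆ labs u' ∧ ∀ x ∈ labs u', x ∈ labs C → x ∈ labs u
  | .leaf x => by
      intro _ C hC u hu
      simp [comps, cutAll] at hC
      subst hC
      rw [sub_leaf_inv hu]
      exact ⟨.leaf x, Sub.refl _, subset_rfl, fun x h _ => h⟩
  | .node l r => by
      intro hnd C hC u hu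
      have ihl := comps_restrict E l (nodup_l hnd)
      have ihr := comps_restrict E r (nodup_r hnd)
      -- membership analysis
      have hmem : C ∈ comps E l ∨ C ∈ comps E r ∨
          (¬ l ∈ E ∧ ¬ r ∈ E ∧ ∃ A B, (cutAll E l).1 = some A ∧ (cutAll E r).1 = some B ∧
            C = PT.node A B) := by
        simp only [comps, cutAll] at hC
        rcases pl : (cutAll E l) with ⟨ol, Ml⟩
        rcases pr : (cutAll E r) with ⟨or_, Mr⟩
        rw [pl, pr] at hC
        simp only [comps, pl, pr]
        by_cases hl : l ∈ E <;> by_cases hr : r ∈ E <;>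
          rcases ol with _ | A <;> rcases or_ with _ | B <;>
          simp_all [Multiset.mem_add] <;> tauto
      rcases hmem with hm | hm | ⟨hl, hr, A, B, hA, hB, rfl⟩
      · obtain ⟨u', h1, h2, h3⟩ := ihl C hm u hu
        exact ⟨u', Sub.left h1, h2, h3⟩
      · obtain ⟨u', h1, h2, h3⟩ := ihr C hm u hu
        exact ⟨u', Sub.right h1, h2, h3⟩
      · have hAc : A ∈ comps E l := by simp [comps, hA]
        have hBc : B ∈ comps E r := by simp [comps, hB]
        have hAl : labs A ⊆ labs l := labs_le (comp_labels_le hAc)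
        have hBr : labs B ⊆ labs r := labs_le (comp_labels_le hBc)
        rcases sub_node_inv hu with rfl | hu' | hu'
        · refine ⟨PT.node l r, Sub.refl _, ?_, fun x _ h => h⟩
          rw [labs, labs]
          exact Finset.union_subset_union hAl hBr
        · obtain ⟨u', h1, h2, h3⟩ := ihl A hAc u hu'
          refine ⟨u', Sub.left h1, h2, fun x hx hxC => ?_⟩
          rw [labs, Finset.mem_union] at hxC
          rcases hxC with hxC | hxC
          · exact h3 x hx hxC
          · exact absurd (hBr hxC) (fun h => nodup_disj hnd (sub_labs h1 hx) h)
        · obtain ⟨u', h1, h2, h3⟩ := ihr B hBc u hu'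
          refine ⟨u', Sub.right h1, h2, fun x hx hxC => ?_⟩
          rw [labs, Finset.mem_union] at hxC
          rcases hxC with hxC | hxC
          · exact absurd (hAl hxC) (fun h => nodup_disj hnd h (sub_labs h1 hx))
          · exact h3 x hx hxC

lemma divF_eq (G : Multiset (PT X)) (E : Finset (PT X)) :
    divF G E = (G.map (comps E)).sum := rfl

lemma mem_divF {G : Multiset (PT X)} {E : Finset (PT X)} {C : PT X}
    (h : C ∈ divF G E) : ∃ t ∈ G, C ∈ comps E t := by
  rw [divF_eq] at h
  obtain ⟨s, hs, hC⟩ := mem_msum.mp h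
  obtain ⟨t, ht, rfl⟩ := Multiset.mem_map.mp hs
  exact ⟨t, ht, hC⟩

lemma labelsF_divF (E : Finset (PT X)) :
    ∀ G : Multiset (PT X), labelsF (divF G E) = labelsF G := by
  intro G
  induction G using Multiset.induction_on with
  | empty => simp [divF_eq, labelsF]
  | cons t G ih =>
    rw [divF_eq] at *
    simp only [Multiset.map_cons, Multiset.sum_cons, labelsF, Multiset.map_add,
      Multiset.sum_add] at *
    rw [ih, comps_labels]

lemma labels_le_of_mem {F : Multiset (PT X)} {C : PT X} (h : C ∈ F) :
    labels C ≤ labelsF F :=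
  mem_le_sum (Multiset.mem_map_of_mem _ h)

lemma comp_unique {F : Multiset (PT X)} (hnd : (labelsF F).Nodup) {C C' : PT X}
    (hC : C ∈ F) (hC' : C' ∈ F) {x : X} (hx : x ∈ labs C) (hx' : x ∈ labs C') : C = C' := by
  by_contra hne
  obtain ⟨F', rfl⟩ := Multiset.exists_cons_of_mem hC
  have hC'' : C' ∈ F' := by
    rcases Multiset.mem_cons.mp hC' with h | h
    · exact absurd h.symm hne
    · exact h
  have : labelsF (C ::ₘ F') = labels C + labelsF F' := by
    simp [labelsF]
  rw [this, Multiset.nodup_add] at hnd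
  exact Multiset.disjoint_left.mp hnd.2.2 ((mem_labs C).mp hx)
    (Multiset.mem_of_le (labels_le_of_mem hC'') ((mem_labs C').mp hx'))


end AuxIncompat

/-- If `ab|c` is a triple of `F₁` incompatible with `F₂`, then in any
agreement forest `F` of `F₁` and `F₂`, the leaves `a` and `b` lie in
different components or the leaves `a` and `c` lie in different
components. -/
theorem incompatible_triple {X : Type} [DecidableEq X] (T₁ T₂ : PT X)
    (hnd₁ : (labels T₁).Nodup) (hnd₂ : (labels T₂).Nodup)
    (hX : labs T₁ = labs T₂)
    (F₁ F₂ F : Multiset (PT X))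
    (hF₁ : ForestOf F₁ {T₁}) (hF₂ : ForestOf F₂ {T₂})
    (hAF₁ : ForestOf F F₁) (hAF₂ : ForestOf F F₂)
    (a b c : X)
    (ht : IsTriple F₁ a b c) (hinc : ¬ IsTriple F₂ a b c) :
    ¬ SameCompLabel F a b ∨ ¬ SameCompLabel F a c := by
  obtain ⟨E₁, hE₁⟩ := hF₁
  obtain ⟨E₂, hE₂⟩ := hF₂
  obtain ⟨Ea, hEa⟩ := hAF₁
  obtain ⟨Eb, hEb⟩ := hAF₂
  have hsingle : ∀ T : PT X, (labels T).Nodup → (labelsF ({T} : Multiset (PT X))).Nodup := by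
    intro T h; simpa [labelsF] using h
  have hndF₁ : (labelsF F₁).Nodup := by
    rw [← hE₁, labelsF_divF]; exact hsingle _ hnd₁
  have hndF₂ : (labelsF F₂).Nodup := by
    rw [← hE₂, labelsF_divF]; exact hsingle _ hnd₂
  have hndF : (labelsF F).Nodup := by
    rw [← hEa, labelsF_divF]; exact hndF₁
  obtain ⟨D, hD, u₀, hu₀, hau₀, hbu₀, hcD, hcu₀⟩ := ht
  have hndD : (labels D).Nodup := Multiset.nodup_of_le (labels_le_of_mem hD) hndF₁
  have hac' : a ≠ c := fun h => hcu₀ (h ▸ hau₀)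
  have hbc' : b ≠ c := fun h => hcu₀ (h ▸ hbu₀)
  by_contra hcon
  push_neg at hcon
  obtain ⟨hab, hac⟩ := hcon
  obtain ⟨Cac, hCac, haac, hcac⟩ := hac
  -- a and c lie in a common component of F₂
  have hF₂comp : ∃ t₂ ∈ F₂, Cac ∈ comps Eb t₂ := mem_divF (hEb ▸ hCac)
  rcases eq_or_ne a b with rfl | hab'
  · -- degenerate case a = b : build the triple a a c in F₂ directly
    obtain ⟨t₂, ht₂, hc₂⟩ := hF₂comp
    have hlabs : labs Cac ⊆ labs t₂ := labs_le (comp_labels_le hc₂)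
    refine hinc ⟨t₂, ht₂, PT.leaf a, leaf_sub (hlabs haac), ?_, ?_, hlabs hcac, ?_⟩
    · simp [labs]
    · simp [labs]
    · simp [labs]; exact fun h => hac' h.symm
  · obtain ⟨Cab, hCab, haab, hbab⟩ := hab
    have hCeq : Cab = Cac := comp_unique hndF hCab hCac haab haac
    subst hCeq
    have hndC : (labels Cab).Nodup := Multiset.nodup_of_le (labels_le_of_mem hCab) hndF
    -- lifting a triple of the component through a forest relation
    have lift : ∀ (G : Multiset (PT X)) (E : Finset (PT X)), divF G E = F →
        (labelsF G).Nodup → ∀ p q s : X, TT Cab p q s → s ∈ labs Cab →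
        ∃ t ∈ G, ∃ u, Sub u t ∧ p ∈ labs u ∧ q ∈ labs u ∧ s ∈ labs t ∧ s ∉ labs u := by
      rintro G E rfl hndG p q s ⟨u, huC, hpu, hqu, hsu⟩ hsC
      obtain ⟨t, htG, hcomp⟩ := mem_divF hCab
      have hndt : (labels t).Nodup := Multiset.nodup_of_le (labels_le_of_mem htG) hndG
      obtain ⟨u', h1, h2, h3⟩ := comps_restrict E t hndt Cab hcomp u huC
      exact ⟨t, htG, u', h1, h2 hpu, h2 hqu, labs_le (comp_labels_le hcomp) hsC,
        fun hx => hsu (h3 s hx hsC)⟩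
    rcases trichotomy Cab hndC haab hbab hcac hab' with h1 | h2 | h3
    · -- ab|c is a triple of the component: lift into F₂, contradiction with hinc
      obtain ⟨t, htG, u, h1', h2', h3', h4', h5'⟩ :=
        lift F₂ Eb hEb hndF₂ a b c h1 hcac
      exact hinc ⟨t, htG, u, h1', h2', h3', h4', h5'⟩
    · -- ac|b in the component: lift into F₁, contradict ab|c there
      obtain ⟨t, htG, u, hut, hau, hcu, hbt, hbu⟩ :=
        lift F₁ Ea hEa hndF₁ a c b h2 hbab
      have hteq : t = D := comp_unique hndF₁ htG hD (sub_labs hut hau) (sub_labs hu₀ hau₀)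
      subst hteq
      rcases nested (x := a) hndD hu₀ hut hau₀ hau with hsub | hsub
      · exact hbu (sub_labs hsub hbu₀)
      · exact hcu₀ (sub_labs hsub hcu)
    · -- bc|a in the component: lift into F₁, contradict ab|c there
      obtain ⟨t, htG, u, hut, hbu, hcu, hat, hau⟩ :=
        lift F₁ Ea hEa hndF₁ b c a h3 haab
      have hteq : t = D := comp_unique hndF₁ htG hD (sub_labs hut hbu) (sub_labs hu₀ hbu₀)
      subst hteq
      rcases nested (x := b) hndD hu₀ hut hbu₀ hbu with hsub | hsub
      · exact hau (sub_labs hsub hau₀)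
      · exact hcu₀ (sub_labs hsub hcu)

end Phylo
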